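/- arXiv:1511.06020 — 3 statements merged into one kernel-verified Lean document; each statement's English description precedes it below -/
import Mathlib

section
/- Let {A_n} be a sequence of n×n complex matrices of vanishing mean variation whose entries are uniformly bounded in modulus by 1. Then for any fixed integers ν_1, …, ν_p and h_1, …, h_p, one has Σ_{j=0}^{n} a_{h_1; ν_1+j}(n) · a_{h_2; ν_2+j}(n) ⋯ a_{h_p; ν_p+j}(n) = Σ_{j=0}^{n} a_{h_1; j}(n) · a_{h_2; j}(n) ⋯ a_{h_p; j}(n) + o(n) as n → ∞. -/
open Filter Asymptotics Matrix

/-- The `j`-th entry of the `k`-th diagonal of an `n × n` complex matrix: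
`a_{k;j} = A_{j, j+k}` for `k ≥ 0` and `a_{k;j} = A_{j+|k|, j}` for `k < 0`,
with the convention that out-of-range entries are `0`. -/
def diagEntry {n : ℕ} (A : Matrix (Fin n) (Fin n) ℂ) (k j : ℤ) : ℂ :=
  if hk : 0 ≤ k then
    if hj : 0 ≤ j ∧ j + k < (n : ℤ) then
      A ⟨j.toNat, by omega⟩ ⟨(j + k).toNat, by omega⟩
    else 0
  else
    if hj : 0 ≤ j ∧ j - k < (n : ℤ) then
      A ⟨(j - k).toNat, by omega⟩ ⟨j.toNat, by omega⟩
    else 0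

/-- A sequence of `n × n` matrices has vanishing mean variation if along each diagonal `k`,
`∑_{j=0}^{n-|k|-2} |a_{k;j+1}(n) - a_{k;j}(n)| = o(n)` as `n → ∞`. -/
def VMV (A : ∀ n : ℕ, Matrix (Fin n) (Fin n) ℂ) : Prop :=
  ∀ k : ℤ, (fun n : ℕ => ∑ j ∈ Finset.range (n - k.natAbs - 1),
      ‖diagEntry (A n) k ((j : ℤ) + 1) - diagEntry (A n) k (j : ℤ)‖)
    =o[atTop] (fun n : ℕ => (n : ℝ))

/-! A product of complex numbers of modulus at most `1` moves by at most the sum of the moves of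
its factors, so it suffices to shift one diagonal at a time. Shifting by `ν` is a chain of `|ν|`
unit steps, and summed over `j` each unit step costs at most the total variation of the diagonal
over `ℤ`. Since the diagonal is padded by zeros, that is its VMV sum plus a bounded boundary
term, so the difference is `O(∑ᵢ |νᵢ| (variation + 1)) = o(n)`. -/

open Finset

theorem norm_prod_sub_prod_le {R ι : Type*} [NormedCommRing R] [NormOneClass R]
    (s : Finset ι) {b c : ι → R} (hb : ∀ i, ‖b i‖ ≤ 1) (hc : ∀ i, ‖c i‖ ≤ 1) :
    ‖∏ i ∈ s, b i - ∏ i ∈ s, c i‖ ≤ ∑ i ∈ s, ‖b i - c i‖ := by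
  induction s using Finset.cons_induction with
  | empty => simp
  | cons a s ha ih =>
    have hbs : ‖∏ i ∈ s, b i‖ ≤ 1 :=
      (Finset.norm_prod_le s b).trans (prod_le_one (fun _ _ => norm_nonneg _) fun i _ => hb i)
    rw [prod_cons, prod_cons, sum_cons]
    calc ‖b a * ∏ i ∈ s, b i - c a * ∏ i ∈ s, c i‖
        = ‖(b a - c a) * ∏ i ∈ s, b i + c a * (∏ i ∈ s, b i - ∏ i ∈ s, c i)‖ := by
          congr 1; ring
      _ ≤ ‖b a - c a‖ * ‖∏ i ∈ s, b i‖ + ‖c a‖ * ‖∏ i ∈ s, b i - ∏ i ∈ s, c i‖ :=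
        (norm_add_le _ _).trans (add_le_add (norm_mul_le _ _) (norm_mul_le _ _))
      _ ≤ ‖b a - c a‖ * 1 + 1 * ∑ i ∈ s, ‖b i - c i‖ := by gcongr; exact hc a
      _ = ‖b a - c a‖ + ∑ i ∈ s, ‖b i - c i‖ := by ring

section Shift

variable {E : Type*} [SeminormedAddCommGroup E]

theorem norm_add_sub_le_sum_range (f : ℤ → E) (a : ℤ) (N : ℕ) :
    ‖f (a + N) - f a‖ ≤ ∑ t ∈ range N, ‖f (a + t + 1) - f (a + t)‖ := by
  simpa [dist_eq_norm', add_assoc] using dist_le_range_sum_dist (fun t : ℕ => f (a + t)) N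

theorem sum_range_norm_shift_sub_le (f : ℤ → E) (N : ℕ) (ν : ℤ) {W : ℝ}
    (hW : ∀ m : ℤ, ∑ j ∈ range N, ‖f (j + m + 1) - f (j + m)‖ ≤ W) :
    ∑ j ∈ range N, ‖f (ν + j) - f j‖ ≤ ν.natAbs * W := by
  -- `ν + j` and `j` are the two ends of the segment from `j + min ν 0` of length `|ν|`
  have hseg : ∀ j : ℤ, ‖f (ν + j) - f j‖ = ‖f (j + min ν 0 + ν.natAbs) - f (j + min ν 0)‖ := by
    intro j
    rcases le_total 0 ν with hν | hν
    · rw [show j + min ν 0 + ν.natAbs = ν + j by omega, show j + min ν 0 = j by omega]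
    · rw [show j + min ν 0 + ν.natAbs = j by omega, show j + min ν 0 = ν + j by omega,
        norm_sub_rev]
  calc ∑ j ∈ range N, ‖f (ν + j) - f j‖
      ≤ ∑ j ∈ range N, ∑ t ∈ range ν.natAbs,
          ‖f (j + (min ν 0 + t) + 1) - f (j + (min ν 0 + t))‖ := by
        gcongr with j
        simpa only [hseg, add_assoc] using norm_add_sub_le_sum_range f (j + min ν 0) ν.natAbs
    _ = ∑ t ∈ range ν.natAbs, ∑ j ∈ range N,
          ‖f (j + (min ν 0 + t) + 1) - f (j + (min ν 0 + t))‖ := sum_comm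
    _ ≤ ∑ t ∈ range ν.natAbs, W := by gcongr with t; exact hW _
    _ = ν.natAbs * W := by simp

end Shift

theorem sum_range_add_le_of_support_subset {Δ : ℤ → ℝ} (hΔ : ∀ s, 0 ≤ Δ s) {T : Finset ℤ}
    (hT : ∀ s, Δ s ≠ 0 → s ∈ T) (N : ℕ) (m : ℤ) :
    ∑ j ∈ range N, Δ (j + m) ≤ ∑ s ∈ T, Δ s := by
  refine (sum_map (range N) (Nat.castEmbedding.trans (addRightEmbedding m)) Δ).symm.trans_le ?_
  rw [← sum_filter_ne_zero]
  exact sum_le_sum_of_subset_of_nonneg (fun s hs => hT s (mem_filter.1 hs).2)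
    fun s _ _ => hΔ s

theorem sum_Icc_neg_one_eq (Δ : ℤ → ℝ) (M : ℕ) :
    ∑ s ∈ Icc (-1 : ℤ) M, Δ s = Δ (-1) + ∑ t ∈ range M, Δ t + Δ M := by
  rw [Int.Icc_eq_finset_map, sum_map, show ((M : ℤ) + 1 - -1).toNat = M + 1 + 1 by omega,
    sum_range_succ', sum_range_succ]
  simp only [Function.Embedding.trans_apply, Nat.castEmbedding_apply, addLeftEmbedding_apply,
    Nat.cast_add, Nat.cast_one, Nat.cast_zero, neg_add_cancel_comm_assoc, add_zero]
  ring

section Diagonals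

variable {n : ℕ} {A : Matrix (Fin n) (Fin n) ℂ}

theorem diagEntry_eq_zero (A : Matrix (Fin n) (Fin n) ℂ) {k j : ℤ}
    (hj : ¬(0 ≤ j ∧ j + k.natAbs < n)) : diagEntry A k j = 0 := by
  unfold diagEntry
  split_ifs <;> first | rfl | omega

theorem norm_diagEntry_le_one (hA : ∀ i j, ‖A i j‖ ≤ 1) (k j : ℤ) : ‖diagEntry A k j‖ ≤ 1 := by
  unfold diagEntry
  split_ifs <;> simp [hA]

-- the sum whose growth `VMV` controls, so `hVMV k` is literally `diagVariation (A ·) k = o(n)`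
noncomputable def diagVariation (A : Matrix (Fin n) (Fin n) ℂ) (k : ℤ) : ℝ :=
  ∑ j ∈ range (n - k.natAbs - 1), ‖diagEntry A k (j + 1) - diagEntry A k j‖

theorem sum_range_norm_diagEntry_step_le (hA : ∀ i j, ‖A i j‖ ≤ 1) (k m : ℤ) (N : ℕ) :
    ∑ j ∈ range N, ‖diagEntry A k (j + m + 1) - diagEntry A k (j + m)‖
      ≤ diagVariation A k + 4 := by
  set M := n - k.natAbs - 1
  have hstep : ∀ s, ‖diagEntry A k (s + 1) - diagEntry A k s‖ ≤ 1 + 1 := fun s =>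
    (norm_sub_le _ _).trans
      (add_le_add (norm_diagEntry_le_one hA k (s + 1)) (norm_diagEntry_le_one hA k s))
  have hsupp : ∀ s, ‖diagEntry A k (s + 1) - diagEntry A k s‖ ≠ 0 → s ∈ Icc (-1 : ℤ) M := by
    intro s hs
    contrapose! hs
    rw [mem_Icc] at hs
    rw [diagEntry_eq_zero A (by omega), diagEntry_eq_zero A (by omega), sub_zero, norm_zero]
  calc _ ≤ ∑ s ∈ Icc (-1 : ℤ) M, ‖diagEntry A k (s + 1) - diagEntry A k s‖ :=
        sum_range_add_le_of_support_subset (fun _ => norm_nonneg _) hsupp N m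
    _ = _ := sum_Icc_neg_one_eq _ M
    _ ≤ (1 + 1) + diagVariation A k + (1 + 1) := by gcongr ?_ + _ + ?_ <;> exact hstep _
    _ = diagVariation A k + 4 := by ring

theorem norm_sum_prod_diagEntry_shift_sub_le (hA : ∀ i j, ‖A i j‖ ≤ 1) {p : ℕ}
    (ν h : Fin p → ℤ) (N : ℕ) :
    ‖∑ j ∈ range N, ∏ i, diagEntry A (h i) (ν i + j) - ∑ j ∈ range N, ∏ i, diagEntry A (h i) j‖
      ≤ ∑ i, (ν i).natAbs * (diagVariation A (h i) + 4) := by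
  rw [← sum_sub_distrib]
  calc _ ≤ ∑ j ∈ range N, ∑ i, ‖diagEntry A (h i) (ν i + j) - diagEntry A (h i) j‖ :=
        (norm_sum_le _ _).trans <| sum_le_sum fun j _ => norm_prod_sub_prod_le _
          (fun i => norm_diagEntry_le_one hA _ _) (fun i => norm_diagEntry_le_one hA _ _)
    _ = ∑ i, ∑ j ∈ range N, ‖diagEntry A (h i) (ν i + j) - diagEntry A (h i) j‖ := sum_comm
    _ ≤ _ := sum_le_sum fun i _ => sum_range_norm_shift_sub_le _ N (ν i)
        (sum_range_norm_diagEntry_step_le hA (h i) · N)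

end Diagonals

/-- **Shift lemma.** For a vanishing-mean-variation sequence of matrices with entries bounded
in modulus by `1`, and any fixed integers `ν₁, …, ν_p` and `h₁, …, h_p`,
`∑_{j=0}^{n} a_{h₁;ν₁+j} ⋯ a_{h_p;ν_p+j} = ∑_{j=0}^{n} a_{h₁;j} ⋯ a_{h_p;j} + o(n)`. -/
theorem shift_lemma (A : ∀ n : ℕ, Matrix (Fin n) (Fin n) ℂ)
    (hVMV : VMV A)
    (hbound : ∀ n, ∀ i j : Fin n, ‖A n i j‖ ≤ 1)
    (p : ℕ) (ν h : Fin p → ℤ) :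
    (fun n : ℕ =>
        (∑ j ∈ Finset.range (n + 1), ∏ i : Fin p, diagEntry (A n) (h i) (ν i + (j : ℤ))) -
        ∑ j ∈ Finset.range (n + 1), ∏ i : Fin p, diagEntry (A n) (h i) (j : ℤ))
      =o[atTop] (fun n : ℕ => (n : ℝ)) := by
  have hconst : (fun _ : ℕ => (4 : ℝ)) =o[atTop] (fun n : ℕ => (n : ℝ)) :=
    isLittleO_const_left.2 <| .inr <| tendsto_norm_atTop_atTop.comp tendsto_natCast_atTop_atTop
  have hmajorant : (fun n => ∑ i, (ν i).natAbs * (diagVariation (A n) (h i) + 4))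
      =o[atTop] (fun n : ℕ => (n : ℝ)) :=
    .fun_sum fun i _ => ((hVMV (h i)).add hconst).const_mul_left _
  refine IsBigO.trans_isLittleO (isBigO_of_le atTop fun n => ?_) hmajorant
  exact (norm_sum_prod_diagEntry_shift_sub_le (hbound n) ν h (n + 1)).trans (le_abs_self _)
end

section
/- Let {A_n} be a VMV sequence of n×n complex matrices of fixed band size k₀ that is μ-distributed on a compact set X ⊆ ℂ^{2k₀+1}. Then for any natural numbers r and s, lim_{n→∞} (1/n) Tr[A_n^r (A_n*)^s] = (1/(2π)) ∫_{−π}^{π} ∫_X P(z,t)^r · conj(P(z,t))^s dμ(z) dt, where A_n* is the conjugate transpose of A_n. -/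
open Filter Asymptotics Matrix MeasureTheory Topology

/-- The vector `a_j(n) = (a_{-k₀;j}, …, a_{k₀;j}) ∈ ℂ^{2k₀+1}` of `j`-th entries of the
diagonals of a band matrix, indexed by `Fin (2k₀+1)` with `i` corresponding to `k = i - k₀`. -/
def diagVec {n : ℕ} (k₀ : ℕ) (A : Matrix (Fin n) (Fin n) ℂ) (j : ℕ) :
    Fin (2 * k₀ + 1) → ℂ :=
  fun i => diagEntry A ((i : ℤ) - (k₀ : ℤ)) (j : ℤ)

/-- The trigonometric polynomial `P(z,t) = ∑_{|k| ≤ k₀} z_k e^{ikt}`. -/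
noncomputable def bandP (k₀ : ℕ) (z : Fin (2 * k₀ + 1) → ℂ) (t : ℝ) : ℂ :=
  ∑ i : Fin (2 * k₀ + 1), z i * Complex.exp (Complex.I * (((i : ℤ) - (k₀ : ℤ) : ℤ) : ℂ) * (t : ℂ))

/-!
Extend the entries of `Aₙ` by zero to `ℤ × ℤ`. Since `Aₙ` and `Aₙᴴ` are banded, the `d`-th
diagonal of `M Aₙ` is a convolution of `2k₀ + 1` diagonals of `M` with the diagonals of `Aₙ`, and
vanishing mean variation says that each diagonal of `Aₙ` is, on average over `j`, unchanged by
a bounded shift of `j`. By induction on the number of factors, the `d`-th diagonal of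
`Aₙ^r (Aₙᴴ)^s` at position `j` therefore equals `ψ_d(a_j(n))` up to an error that is `o(n)` in
sum, where the symbol `ψ_d(z)` is the corresponding iterated convolution of the coordinates of
`z`; that convolution is precisely the `d`-th Fourier coefficient of
`P(z,·)^r conj(P(z,·))^s`. For `d = 0` the normalized trace is thus
`(1/n) ∑_j ψ_0(a_j(n)) + o(1)`, which converges to `∫_X ψ_0 dμ` because `ψ_0` is continuous,
and Fubini identifies the limit.
-/

def extEntry {n : ℕ} (M : Matrix (Fin n) (Fin n) ℂ) (p q : ℤ) : ℂ :=
  if h : 0 ≤ p ∧ p < n ∧ 0 ≤ q ∧ q < n then M ⟨p.toNat, by omega⟩ ⟨q.toNat, by omega⟩ else 0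

section extEntry

variable {n : ℕ} (M B : Matrix (Fin n) (Fin n) ℂ)

lemma extEntry_eq_diagEntry (p q : ℤ) : extEntry M p q = diagEntry M (q - p) (min p q) := by
  unfold extEntry diagEntry
  split_ifs <;> first | rfl | omega | (congr 1 <;> ext <;> simp <;> omega)

lemma extEntry_conjTranspose (p q : ℤ) : extEntry Mᴴ p q = starRingEnd ℂ (extEntry M q p) := by
  unfold extEntry
  split_ifs <;> first | omega | simp [Matrix.conjTranspose_apply]

lemma extEntry_coe (i j : Fin n) : extEntry M i j = M i j := by
  rw [extEntry, dif_pos (by omega)]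
  congr

lemma extEntry_eq_zero_of_not_mem {p q : ℤ} (h : ¬ (0 ≤ p ∧ p < n ∧ 0 ≤ q ∧ q < n)) :
    extEntry M p q = 0 :=
  dif_neg h

lemma trace_eq_sum_extEntry : M.trace = ∑ j ∈ Finset.range n, extEntry M j j := by
  rw [Matrix.trace, ← Fin.sum_univ_eq_sum_range (fun j => extEntry M j j)]
  simp [extEntry_coe]

lemma extEntry_mul_eq_sum_range (p q : ℤ) :
    extEntry (M * B) p q = ∑ u ∈ Finset.range n, extEntry M p u * extEntry B u q := by
  by_cases h : 0 ≤ p ∧ p < n ∧ 0 ≤ q ∧ q < n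
  · lift p to ℕ using h.1
    lift q to ℕ using h.2.2.1
    have hp : p < n := by omega
    have hq : q < n := by omega
    rw [← Fin.sum_univ_eq_sum_range (fun u => extEntry M p u * extEntry B u q),
      extEntry_coe (M * B) ⟨p, hp⟩ ⟨q, hq⟩, Matrix.mul_apply]
    exact Finset.sum_congr rfl fun u _ =>
      congrArg₂ (· * ·) (extEntry_coe M ⟨p, hp⟩ u).symm (extEntry_coe B u ⟨q, hq⟩).symm
  · rw [extEntry_eq_zero_of_not_mem _ h]
    refine (Finset.sum_eq_zero fun u _ => ?_).symm
    by_cases hq : 0 ≤ q ∧ q < n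
    · rw [extEntry_eq_zero_of_not_mem M (by omega), zero_mul]
    · rw [extEntry_eq_zero_of_not_mem B (by omega), mul_zero]

lemma bounds_of_extEntry_ne_zero {p q : ℤ} (h : extEntry M p q ≠ 0) :
    0 ≤ p ∧ p < n ∧ 0 ≤ q ∧ q < n := by
  by_contra h'
  exact h (extEntry_eq_zero_of_not_mem M h')

lemma extEntry_mul_of_band {b : ℕ} (hB : ∀ p q : ℤ, (b : ℤ) < |q - p| → extEntry B p q = 0)
    (p q : ℤ) :
    extEntry (M * B) p q =
      ∑ i : Fin (2 * b + 1), extEntry M p (q - (i - b)) * extEntry B (q - (i - b)) q := by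
  rw [extEntry_mul_eq_sum_range]
  symm
  refine Finset.sum_bij_ne_zero (fun i _ _ => (q - (i - b)).toNat) (fun i _ hi => ?_)
    (fun i _ hi j _ hj hij => ?_) (fun u _ hu => ?_) (fun i _ hi => ?_)
  · have := bounds_of_extEntry_ne_zero B (right_ne_zero_of_mul hi)
    simp only [Finset.mem_range]
    omega
  · have := bounds_of_extEntry_ne_zero B (right_ne_zero_of_mul hi)
    have := bounds_of_extEntry_ne_zero B (right_ne_zero_of_mul hj)
    ext
    omega
  · have hband : |q - u| ≤ b := by
      by_contra hc
      exact hu (by rw [hB _ _ (not_le.mp hc), mul_zero])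
    rw [abs_le] at hband
    refine ⟨⟨(q - u + b).toNat, by omega⟩, Finset.mem_univ _, ?_, by simp; omega⟩
    convert hu using 3 <;> simp <;> omega
  · have := bounds_of_extEntry_ne_zero B (right_ne_zero_of_mul hi)
    congr 2 <;> omega

lemma extEntry_one (p q : ℤ) :
    extEntry (1 : Matrix (Fin n) (Fin n) ℂ) p q = if p = q ∧ 0 ≤ p ∧ p < n then 1 else 0 := by
  unfold extEntry
  split_ifs <;> simp [Matrix.one_apply, Fin.ext_iff] <;> omega

end extEntry

section variation

variable {E : Type*} [SeminormedAddCommGroup E] {D : ℤ → E} {m : ℕ} {C : ℝ}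

lemma sum_norm_succ_sub_le (hD : ∀ t : ℤ, t < 0 ∨ m ≤ t → D t = 0)
    (hC : ∀ t, ‖D t‖ ≤ C) (S : Finset ℤ) :
    ∑ t ∈ S, ‖D (t + 1) - D t‖ ≤
      ∑ j ∈ Finset.range (m - 1), ‖D (j + 1) - D j‖ + 4 * C := by
  set g : ℤ → ℝ := fun t => ‖D (t + 1) - D t‖
  set I : Finset ℤ := (Finset.range (m - 1)).map Nat.castEmbedding
  have hg : ∀ t, g t ≤ 2 * C := fun t => (norm_sub_le _ _).trans (by linarith [hC (t + 1), hC t])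
  have hsupp : ∀ t ∉ I, t ≠ -1 → t ≠ m - 1 → g t = 0 := by
    intro t hI h₁ h₂
    have hI' : ¬ (0 ≤ t ∧ t < m - 1) := fun ht =>
      hI (Finset.mem_map.2 ⟨t.toNat, Finset.mem_range.2 (by omega), by simp; omega⟩)
    simp [g, hD t (by omega), hD (t + 1) (by omega)]
  have hedge : ∑ t ∈ S \ I, g t ≤ 4 * C := by
    rw [← Finset.sum_subset (Finset.inter_subset_left (s₂ := {-1, (m : ℤ) - 1}))]
    · refine (Finset.sum_le_card_nsmul _ _ _ fun t _ => hg t).trans ?_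
      have hcard : ((S \ I) ∩ {-1, (m : ℤ) - 1}).card ≤ 2 :=
        (Finset.card_le_card Finset.inter_subset_right).trans Finset.card_le_two
      rw [nsmul_eq_mul]
      have : (((S \ I) ∩ {-1, (m : ℤ) - 1}).card : ℝ) ≤ 2 := by exact_mod_cast hcard
      nlinarith [(norm_nonneg _).trans (hC 0)]
    · intro t ht hnot
      simp only [Finset.mem_sdiff, Finset.mem_inter, Finset.mem_insert, Finset.mem_singleton,
        not_and, not_or] at ht hnot
      exact hsupp t ht.2 (hnot ht).1 (hnot ht).2
  calc ∑ t ∈ S, g t = ∑ t ∈ S ∩ I, g t + ∑ t ∈ S \ I, g t :=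
        (Finset.sum_inter_add_sum_sdiff S I g).symm
    _ ≤ ∑ t ∈ I, g t + 4 * C := by
        gcongr
        exact Finset.inter_subset_right
    _ = ∑ j ∈ Finset.range (m - 1), ‖D (j + 1) - D j‖ + 4 * C := by
        simp [I, g]

lemma sum_norm_shift_sub_le (hD : ∀ t : ℤ, t < 0 ∨ m ≤ t → D t = 0) (hC : ∀ t, ‖D t‖ ≤ C)
    (c : ℤ) (n : ℕ) :
    ∑ j ∈ Finset.range n, ‖D (j + c) - D j‖ ≤
      c.natAbs * (∑ j ∈ Finset.range (m - 1), ‖D (j + 1) - D j‖ + 4 * C) := by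
  have hstep : ∀ j : ℕ, ‖D (j + c) - D j‖ ≤
      ∑ l ∈ Finset.range c.natAbs, ‖D (j + (min c 0 + l) + 1) - D (j + (min c 0 + l))‖ := by
    intro j
    set f : ℕ → E := fun l => D (j + (min c 0 + l))
    calc ‖D (j + c) - D j‖ = dist (f 0) (f c.natAbs) := by
          rcases le_total 0 c with hc | hc
          · rw [dist_comm, dist_eq_norm]
            congr 3 <;> omega
          · rw [dist_eq_norm]
            congr 3 <;> omega
      _ ≤ ∑ l ∈ Finset.range c.natAbs, dist (f l) (f (l + 1)) := dist_le_range_sum_dist f _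
      _ = _ := Finset.sum_congr rfl fun l _ => by
          rw [dist_comm, dist_eq_norm]
          simp only [f]
          congr 3
          push_cast
          ring
  calc ∑ j ∈ Finset.range n, ‖D (j + c) - D j‖
      ≤ ∑ l ∈ Finset.range c.natAbs, ∑ j ∈ Finset.range n,
          ‖D (j + (min c 0 + l) + 1) - D (j + (min c 0 + l))‖ := by
        rw [Finset.sum_comm]
        exact Finset.sum_le_sum fun j _ => hstep j
    _ ≤ ∑ _l ∈ Finset.range c.natAbs,
          (∑ j ∈ Finset.range (m - 1), ‖D (j + 1) - D j‖ + 4 * C) := by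
        refine Finset.sum_le_sum fun l _ => ?_
        have := sum_norm_succ_sub_le hD hC
          ((Finset.range n).image fun j : ℕ => (j : ℤ) + (min c 0 + l))
        rwa [Finset.sum_image fun i _ j _ h => by simpa using h] at this
    _ = _ := by rw [Finset.sum_const, Finset.card_range, nsmul_eq_mul]

end variation

lemma diagEntry_eq_zero_of_lt_zero_or_le {n : ℕ} (M : Matrix (Fin n) (Fin n) ℂ) {k t : ℤ}
    (h : t < 0 ∨ ((n - k.natAbs : ℕ) : ℤ) ≤ t) : diagEntry M k t = 0 := by
  unfold diagEntry
  split_ifs <;> first | rfl | omega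

lemma VMV.isLittleO_sum_norm_shift_sub {A : ∀ n : ℕ, Matrix (Fin n) (Fin n) ℂ} (hVMV : VMV A)
    {C : ℝ} (hC : ∀ n k j, ‖diagEntry (A n) k j‖ ≤ C) (k c : ℤ) :
    (fun n => ∑ j ∈ Finset.range n, ‖diagEntry (A n) k (j + c) - diagEntry (A n) k j‖)
      =o[atTop] (fun n => (n : ℝ)) := by
  have hconst : (fun _ : ℕ => 4 * C) =o[atTop] (fun n => (n : ℝ)) :=
    isLittleO_const_left.2 <| .inr <| tendsto_norm_atTop_atTop.comp tendsto_natCast_atTop_atTop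
  refine (IsBigO.of_norm_le fun n => ?_).trans_isLittleO
    (((hVMV k).add hconst).const_mul_left (c.natAbs : ℝ))
  rw [Real.norm_of_nonneg (Finset.sum_nonneg fun _ _ => norm_nonneg _)]
  exact sum_norm_shift_sub_le (fun t ht => diagEntry_eq_zero_of_lt_zero_or_le _ ht) (hC n k) c n

lemma norm_sum_mul_sub_sum_mul_le {ι R : Type*} [SeminormedRing R] (s : Finset ι)
    {x y u v : ι → R} {C : ℝ} {K : ι → ℝ} (hy : ∀ i ∈ s, ‖y i‖ ≤ C) (hu : ∀ i ∈ s, ‖u i‖ ≤ K i) :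
    ‖∑ i ∈ s, x i * y i - ∑ i ∈ s, u i * v i‖ ≤
      ∑ i ∈ s, (C * ‖x i - u i‖ + K i * ‖y i - v i‖) := by
  rw [← Finset.sum_sub_distrib]
  refine (norm_sum_le _ _).trans (Finset.sum_le_sum fun i hi => ?_)
  calc ‖x i * y i - u i * v i‖ = ‖(x i - u i) * y i + u i * (y i - v i)‖ := by noncomm_ring
    _ ≤ ‖x i - u i‖ * ‖y i‖ + ‖u i‖ * ‖y i - v i‖ :=
        (norm_add_le _ _).trans (add_le_add (norm_mul_le _ _) (norm_mul_le _ _))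
    _ ≤ C * ‖x i - u i‖ + K i * ‖y i - v i‖ := by
        rw [mul_comm C]
        gcongr
        exacts [hy i hi, hu i hi]

noncomputable def diagDefect {V : Type*} (M : ∀ n : ℕ, Matrix (Fin n) (Fin n) ℂ) (a : ℕ → ℕ → V)
    (c d : ℤ) (f : V → ℂ) (n : ℕ) : ℝ :=
  ∑ j ∈ Finset.range n, ‖extEntry (M n) (j + c) (j + c + d) - f (a n j)‖

/-- `φ i` is the coefficient of the diagonal `i - b`, as in `bandP`. -/
def bandConv {V : Type*} (b : ℕ) (φ : Fin (2 * b + 1) → V → ℂ) (ψ : ℤ → V → ℂ) :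
    ℤ → V → ℂ :=
  fun d z => ∑ i : Fin (2 * b + 1), ψ (d - ((i : ℤ) - b)) z * φ i z

section bandConv

variable {V : Type*} [TopologicalSpace V] {X : Set V} {b : ℕ} {φ : Fin (2 * b + 1) → V → ℂ}

lemma continuousOn_bandConv_iterate (hφ : ∀ i, ContinuousOn (φ i) X) {ψ : ℤ → V → ℂ}
    (hψ : ∀ d, ContinuousOn (ψ d) X) (s : ℕ) (d : ℤ) :
    ContinuousOn ((bandConv b φ)^[s] ψ d) X := by
  induction s generalizing d with
  | zero => exact hψ d
  | succ s ih =>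
    rw [Function.iterate_succ_apply']
    exact continuousOn_finsetSum _ fun i _ => (ih _).mul (hφ i)

variable {a : ℕ → ℕ → V} {M B : ∀ n : ℕ, Matrix (Fin n) (Fin n) ℂ} {C : ℝ}

lemma isLittleO_diagDefect_mul (hX : IsCompact X) (ha : ∀ n j, j < n → a n j ∈ X)
    (hBband : ∀ n (p q : ℤ), (b : ℤ) < |q - p| → extEntry (B n) p q = 0)
    (hBC : ∀ n p q, ‖extEntry (B n) p q‖ ≤ C)
    (hB : ∀ (i : Fin (2 * b + 1)) (c : ℤ),
      diagDefect B a c (i - b) (φ i) =o[atTop] (fun n => (n : ℝ)))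
    {ψ : ℤ → V → ℂ} (hψ : ∀ d, ContinuousOn (ψ d) X)
    (hM : ∀ d, diagDefect M a 0 d (ψ d) =o[atTop] (fun n => (n : ℝ))) (d : ℤ) :
    diagDefect (fun n => M n * B n) a 0 d (bandConv b φ ψ d) =o[atTop] (fun n => (n : ℝ)) := by
  have hbound : ∀ i : Fin (2 * b + 1), ∃ K, ∀ z ∈ X, ‖ψ (d - (i - b)) z‖ ≤ K := fun i =>
    hX.exists_bound_of_continuousOn (hψ _)
  choose K hK using hbound
  have hsum : (fun n => ∑ i : Fin (2 * b + 1), (C * diagDefect M a 0 (d - (i - b)) (ψ _) n +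
      K i * diagDefect B a (d - (i - b)) (i - b) (φ i) n)) =o[atTop] (fun n => (n : ℝ)) :=
    IsLittleO.fun_sum fun i _ => ((hM _).const_mul_left C).add ((hB i _).const_mul_left (K i))
  refine (IsBigO.of_norm_le fun n => ?_).trans_isLittleO hsum
  simp only [diagDefect, Finset.mul_sum, ← Finset.sum_add_distrib]
  rw [Real.norm_of_nonneg (Finset.sum_nonneg fun _ _ => norm_nonneg _)]
  rw [Finset.sum_comm]
  refine Finset.sum_le_sum fun j hj => ?_
  rw [extEntry_mul_of_band _ _ (hBband n)]
  refine (norm_sum_mul_sub_sum_mul_le _ (fun i _ => hBC n _ _)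
    (fun i _ => hK i _ (ha n j (Finset.mem_range.1 hj)))).trans_eq ?_
  refine Finset.sum_congr rfl fun i _ => ?_
  congr 4 <;> ring_nf

lemma isLittleO_diagDefect_mul_pow (hX : IsCompact X) (ha : ∀ n j, j < n → a n j ∈ X)
    (hBband : ∀ n (p q : ℤ), (b : ℤ) < |q - p| → extEntry (B n) p q = 0)
    (hBC : ∀ n p q, ‖extEntry (B n) p q‖ ≤ C) (hφ : ∀ i, ContinuousOn (φ i) X)
    (hB : ∀ (i : Fin (2 * b + 1)) (c : ℤ),
      diagDefect B a c (i - b) (φ i) =o[atTop] (fun n => (n : ℝ)))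
    {ψ : ℤ → V → ℂ} (hψ : ∀ d, ContinuousOn (ψ d) X)
    (hM : ∀ d, diagDefect M a 0 d (ψ d) =o[atTop] (fun n => (n : ℝ))) (s : ℕ) (d : ℤ) :
    diagDefect (fun n => M n * B n ^ s) a 0 d ((bandConv b φ)^[s] ψ d)
      =o[atTop] (fun n => (n : ℝ)) := by
  induction s generalizing d with
  | zero => simpa using hM d
  | succ s ih =>
    simp only [pow_succ, ← mul_assoc, Function.iterate_succ_apply']
    exact isLittleO_diagDefect_mul hX ha hBband hBC hB
      (continuousOn_bandConv_iterate hφ hψ s) ih d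

end bandConv

section band

variable {k₀ : ℕ} {A : ∀ n : ℕ, Matrix (Fin n) (Fin n) ℂ}

lemma exists_bound_diagEntry {X : Set (Fin (2 * k₀ + 1) → ℂ)} (hX : IsCompact X)
    (hmem : ∀ n j, j < n → diagVec k₀ (A n) j ∈ X)
    (hband : ∀ n (k j : ℤ), (k₀ : ℤ) < |k| → diagEntry (A n) k j = 0) :
    ∃ C, ∀ n k j, ‖diagEntry (A n) k j‖ ≤ C := by
  obtain ⟨C, hC⟩ := hX.exists_bound_of_continuousOn continuousOn_id
  refine ⟨max C 0, fun n k j => ?_⟩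
  by_cases hk : (k₀ : ℤ) < |k|
  · simp [hband n k j hk]
  by_cases hj : j < 0 ∨ ((n - k.natAbs : ℕ) : ℤ) ≤ j
  · simp [diagEntry_eq_zero_of_lt_zero_or_le _ hj]
  rw [not_lt, abs_le] at hk
  have hentry : diagEntry (A n) k j = diagVec k₀ (A n) j.toNat ⟨(k + k₀).toNat, by omega⟩ := by
    simp only [diagVec]
    congr 1 <;> omega
  rw [hentry]
  exact (norm_le_pi_norm _ _).trans ((hC _ (hmem n _ (by omega))).trans (le_max_left _ _))

lemma isLittleO_diagDefect_self (hVMV : VMV A) {C : ℝ}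
    (hC : ∀ n k j, ‖diagEntry (A n) k j‖ ≤ C)
    (i : Fin (2 * k₀ + 1)) (c : ℤ) :
    diagDefect A (fun n => diagVec k₀ (A n)) c (i - k₀) (fun z => z i)
      =o[atTop] (fun n => (n : ℝ)) := by
  -- the entry `(j + c, j + c + k)` is the entry of diagonal `k` at position `j + c + min k 0`
  convert hVMV.isLittleO_sum_norm_shift_sub hC ((i : ℤ) - k₀) (c + min ((i : ℤ) - k₀) 0)
    using 2 with n
  refine Finset.sum_congr rfl fun j _ => ?_
  rw [extEntry_eq_diagEntry]
  simp only [diagVec]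
  congr 3 <;> omega

lemma isLittleO_diagDefect_conjTranspose (hVMV : VMV A) {C : ℝ}
    (hC : ∀ n k j, ‖diagEntry (A n) k j‖ ≤ C) (i : Fin (2 * k₀ + 1)) (c : ℤ) :
    diagDefect (fun n => (A n)ᴴ) (fun n => diagVec k₀ (A n)) c (i - k₀)
      (fun z => starRingEnd ℂ (z i.rev)) =o[atTop] (fun n => (n : ℝ)) := by
  convert hVMV.isLittleO_sum_norm_shift_sub hC ((i.rev : ℤ) - k₀) (c + min ((i : ℤ) - k₀) 0)
    using 2 with n
  refine Finset.sum_congr rfl fun j _ => ?_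
  rw [extEntry_conjTranspose, extEntry_eq_diagEntry, ← map_sub, Complex.norm_conj]
  simp only [diagVec, Fin.val_rev]
  congr 3 <;> omega

lemma extEntry_eq_zero_of_band (hband : ∀ n (k j : ℤ), (k₀ : ℤ) < |k| → diagEntry (A n) k j = 0)
    (n : ℕ) {p q : ℤ} (h : (k₀ : ℤ) < |q - p|) :
    extEntry (A n) p q = 0 := by
  rw [extEntry_eq_diagEntry, hband n _ _ h]

lemma extEntry_conjTranspose_eq_zero_of_band
    (hband : ∀ n (k j : ℤ), (k₀ : ℤ) < |k| → diagEntry (A n) k j = 0)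
    (n : ℕ) {p q : ℤ} (h : (k₀ : ℤ) < |q - p|) :
    extEntry (A n)ᴴ p q = 0 := by
  rw [extEntry_conjTranspose, extEntry_eq_zero_of_band hband n (by rwa [abs_sub_comm]), map_zero]

end band

/-- The symbol of `A^r (Aᴴ)^s`: `r` convolutions with the band coefficients `z`, then `s` with
those of `Aᴴ`, starting from the symbol `δ_{d,0}` of the identity. -/
noncomputable def momentSymbol (k₀ r s : ℕ) : ℤ → (Fin (2 * k₀ + 1) → ℂ) → ℂ :=
  (bandConv k₀ fun i z => starRingEnd ℂ (z i.rev))^[s]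
    ((bandConv k₀ fun i z => z i)^[r] fun d _ => if d = 0 then 1 else 0)

lemma continuous_momentSymbol (k₀ r s : ℕ) (d : ℤ) : Continuous (momentSymbol k₀ r s d) := by
  rw [← continuousOn_univ]
  exact continuousOn_bandConv_iterate (fun i => (Complex.continuous_conj.comp
    (continuous_apply _)).continuousOn) (continuousOn_bandConv_iterate
      (fun i => (continuous_apply i).continuousOn) (fun _ => continuousOn_const) r) s d

lemma diagDefect_one_eq_zero {V : Type*} (a : ℕ → ℕ → V) (d : ℤ) :
    diagDefect (fun _ => 1) a 0 d (fun _ => if d = 0 then 1 else 0) = 0 := by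
  ext n
  refine Finset.sum_eq_zero fun j hj => ?_
  rw [Finset.mem_range] at hj
  simp only [extEntry_one]
  split_ifs <;> simp <;> omega

lemma isLittleO_diagDefect_moment {k₀ : ℕ} {A : ∀ n : ℕ, Matrix (Fin n) (Fin n) ℂ}
    (hVMV : VMV A) (hband : ∀ n (k j : ℤ), (k₀ : ℤ) < |k| → diagEntry (A n) k j = 0)
    {X : Set (Fin (2 * k₀ + 1) → ℂ)} (hX : IsCompact X)
    (hmem : ∀ n j, j < n → diagVec k₀ (A n) j ∈ X) (r s : ℕ) (d : ℤ) :
    diagDefect (fun n => A n ^ r * (A n)ᴴ ^ s) (fun n => diagVec k₀ (A n)) 0 d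
      (momentSymbol k₀ r s d) =o[atTop] (fun n => (n : ℝ)) := by
  obtain ⟨C, hC⟩ := exists_bound_diagEntry hX hmem hband
  have hAC : ∀ n p q, ‖extEntry (A n) p q‖ ≤ C := fun n p q => by
    rw [extEntry_eq_diagEntry]
    exact hC n _ _
  have hAHC : ∀ n p q, ‖extEntry (A n)ᴴ p q‖ ≤ C := fun n p q => by
    rw [extEntry_conjTranspose, Complex.norm_conj]
    exact hAC n q p
  have hφA : ∀ i, ContinuousOn (fun z : Fin (2 * k₀ + 1) → ℂ => z i) X := fun i =>
    (continuous_apply i).continuousOn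
  have hφAH : ∀ i : Fin (2 * k₀ + 1), ContinuousOn (fun z => starRingEnd ℂ (z i.rev)) X :=
    fun i => (Complex.continuous_conj.comp (continuous_apply _)).continuousOn
  have hpow := isLittleO_diagDefect_mul_pow (M := fun _ => 1) hX hmem
    (fun n _ _ => extEntry_eq_zero_of_band hband n) hAC hφA (isLittleO_diagDefect_self hVMV hC)
    (fun _ => continuousOn_const)
    (fun d => by rw [diagDefect_one_eq_zero]; exact isLittleO_zero _ _) r
  simp only [one_mul] at hpow
  exact isLittleO_diagDefect_mul_pow hX hmem
    (fun n _ _ => extEntry_conjTranspose_eq_zero_of_band hband n) hAHC hφAH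
    (isLittleO_diagDefect_conjTranspose hVMV hC)
    (continuousOn_bandConv_iterate hφA (fun _ => continuousOn_const) r) hpow s d

section fourier

open Complex

noncomputable def fourierCoeffPi (F : ℝ → ℂ) (d : ℤ) : ℂ :=
  (2 * (Real.pi : ℂ))⁻¹ * ∫ t in -Real.pi..Real.pi, F t * exp (-(I * d * t))

lemma integral_exp_int_mul (m : ℤ) :
    ∫ t in -Real.pi..Real.pi, exp (I * m * t) = if m = 0 then 2 * (Real.pi : ℂ) else 0 := by
  split_ifs with hm
  · simp [hm, intervalIntegral.integral_const]
    ring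
  · have hc : I * m ≠ 0 := mul_ne_zero I_ne_zero (Int.cast_ne_zero.mpr hm)
    rw [integral_exp_mul_complex hc, div_eq_zero_iff, sub_eq_zero]
    refine .inl (exp_eq_exp_iff_exists_int.2 ⟨m, ?_⟩)
    push_cast
    ring

lemma fourierCoeffPi_one (d : ℤ) : fourierCoeffPi (fun _ => 1) d = if d = 0 then 1 else 0 := by
  have h := integral_exp_int_mul (-d)
  simp only [Int.cast_neg, mul_neg, neg_mul, neg_eq_zero] at h
  simp only [fourierCoeffPi, one_mul, h]
  split_ifs
  · exact inv_mul_cancel₀ (by simp [Real.pi_ne_zero])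
  · exact mul_zero _

lemma continuous_uncurry_bandP (b : ℕ) : Continuous (Function.uncurry (bandP b)) := by
  unfold bandP Function.uncurry
  fun_prop

lemma continuous_bandP (b : ℕ) (w : Fin (2 * b + 1) → ℂ) : Continuous (bandP b w) :=
  (continuous_uncurry_bandP b).uncurry_left w

lemma fourierCoeffPi_mul_bandP {F : ℝ → ℂ} (hF : Continuous F) (b : ℕ)
    (w : Fin (2 * b + 1) → ℂ) (d : ℤ) :
    fourierCoeffPi (fun t => F t * bandP b w t) d =
      ∑ i : Fin (2 * b + 1), fourierCoeffPi F (d - (i - b)) * w i := by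
  have hterm : ∀ t : ℝ, F t * bandP b w t * exp (-(I * d * t)) =
      ∑ i : Fin (2 * b + 1), w i * (F t * exp (-(I * ((d - (i - b) : ℤ) : ℂ) * t))) := by
    intro t
    simp only [bandP, Finset.mul_sum, Finset.sum_mul]
    refine Finset.sum_congr rfl fun i _ => ?_
    calc _ = w i * (F t * (exp (I * ((i - b : ℤ) : ℂ) * t) * exp (-(I * d * t)))) := by ring
      _ = _ := by
        rw [← exp_add]
        congr 3
        push_cast
        ring
  simp only [fourierCoeffPi, hterm]
  rw [intervalIntegral.integral_finsetSum fun i _ =>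
    Continuous.intervalIntegrable (by fun_prop) _ _, Finset.mul_sum]
  refine Finset.sum_congr rfl fun i _ => ?_
  rw [intervalIntegral.integral_const_mul]
  ring

lemma bandConv_iterate_eq_fourierCoeffPi {V : Type*} {b : ℕ} (φ : Fin (2 * b + 1) → V → ℂ)
    {ψ : ℤ → V → ℂ} {F : ℝ → ℂ} (hF : Continuous F) {z : V}
    (hψ : ∀ d, ψ d z = fourierCoeffPi F d) (s : ℕ) (d : ℤ) :
    (bandConv b φ)^[s] ψ d z =
      fourierCoeffPi (fun t => F t * bandP b (fun i => φ i z) t ^ s) d := by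
  induction s generalizing d with
  | zero => simpa using hψ d
  | succ s ih =>
    have hcont : Continuous fun t => F t * bandP b (fun i => φ i z) t ^ s :=
      hF.mul ((continuous_bandP _ _).pow s)
    simp only [Function.iterate_succ_apply', bandConv, ih, pow_succ, ← mul_assoc,
      fourierCoeffPi_mul_bandP hcont]

lemma bandP_conj_rev (b : ℕ) (w : Fin (2 * b + 1) → ℂ) (t : ℝ) :
    bandP b (fun i => starRingEnd ℂ (w i.rev)) t = starRingEnd ℂ (bandP b w t) := by
  simp only [bandP, map_sum, map_mul, ← exp_conj]
  refine Fintype.sum_equiv Fin.revPerm _ _ fun i => ?_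
  simp only [Fin.revPerm_apply, conj_I, conj_ofReal, map_intCast]
  have hrev : ((i.rev : ℕ) : ℤ) = 2 * b - i := by rw [Fin.val_rev]; omega
  rw [hrev]
  congr 2
  push_cast
  ring

end fourier

lemma momentSymbol_eq_fourierCoeffPi (k₀ r s : ℕ) (d : ℤ) (z : Fin (2 * k₀ + 1) → ℂ) :
    momentSymbol k₀ r s d z =
      fourierCoeffPi (fun t => bandP k₀ z t ^ r * starRingEnd ℂ (bandP k₀ z t) ^ s) d := by
  have hA := bandConv_iterate_eq_fourierCoeffPi (fun i (z : Fin (2 * k₀ + 1) → ℂ) => z i)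
    (ψ := fun d _ => if d = 0 then 1 else 0) (continuous_const (y := 1)) (z := z)
    (fun d => (fourierCoeffPi_one d).symm) r
  simp only [one_mul] at hA
  simpa only [momentSymbol, bandP_conj_rev] using bandConv_iterate_eq_fourierCoeffPi
    (fun i (z : Fin (2 * k₀ + 1) → ℂ) => starRingEnd ℂ (z i.rev))
    (F := fun t => bandP k₀ z t ^ r) ((continuous_bandP k₀ z).pow r) hA s d

lemma integral_fourierCoeffPi_zero {V : Type*} [TopologicalSpace V] [MeasurableSpace V]
    [OpensMeasurableSpace V] [T2Space V] [SecondCountableTopology V]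
    {μ : Measure V} [IsFiniteMeasure μ]
    {X : Set V} (hX : IsCompact X) {F : V → ℝ → ℂ} (hF : Continuous (Function.uncurry F)) :
    ∫ z in X, fourierCoeffPi (F z) 0 ∂μ =
      (2 * (Real.pi : ℂ))⁻¹ * ∫ t in -Real.pi..Real.pi, ∫ z in X, F z t ∂μ := by
  have hint : Integrable (Function.uncurry fun t z => F z t)
      ((volume.restrict (Set.uIoc (-Real.pi) Real.pi)).prod (μ.restrict X)) := by
    rw [Measure.prod_restrict]
    refine IntegrableOn.mono_set ?_ (Set.prod_mono Set.uIoc_subset_uIcc subset_rfl)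
    exact (hF.comp continuous_swap).continuousOn.integrableOn_compact (isCompact_uIcc.prod hX)
  simp only [fourierCoeffPi, Int.cast_zero, mul_zero, zero_mul, neg_zero, Complex.exp_zero,
    mul_one]
  rw [integral_const_mul, intervalIntegral_integral_swap hint]

lemma tendsto_inv_mul_trace_of_diagDefect {V : Type*} {M : ∀ n : ℕ, Matrix (Fin n) (Fin n) ℂ}
    {a : ℕ → ℕ → V} {f : V → ℂ} {L : ℂ}
    (hM : diagDefect M a 0 0 f =o[atTop] (fun n => (n : ℝ)))
    (hf : Tendsto (fun n : ℕ => (n : ℂ)⁻¹ * ∑ j ∈ Finset.range n, f (a n j)) atTop (𝓝 L)) :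
    Tendsto (fun n : ℕ => (n : ℂ)⁻¹ * (M n).trace) atTop (𝓝 L) := by
  have hdiff : Tendsto (fun n : ℕ => (n : ℂ)⁻¹ * (M n).trace -
      (n : ℂ)⁻¹ * ∑ j ∈ Finset.range n, f (a n j)) atTop (𝓝 0) := by
    rw [tendsto_zero_iff_norm_tendsto_zero]
    refine squeeze_zero (fun _ => norm_nonneg _) (fun n => ?_) hM.tendsto_div_nhds_zero
    rw [← mul_sub, trace_eq_sum_extEntry, ← Finset.sum_sub_distrib, norm_mul, norm_inv,
      Complex.norm_natCast, div_eq_inv_mul]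
    gcongr
    simpa [diagDefect] using
      norm_sum_le (Finset.range n) fun j => extEntry (M n) j j - f (a n j)
  simpa using hdiff.add hf

theorem trace_moments_band_general (k₀ : ℕ) (A : ∀ n : ℕ, Matrix (Fin n) (Fin n) ℂ)
    (hVMV : VMV A)
    (hband : ∀ n : ℕ, ∀ k j : ℤ, (k₀ : ℤ) < |k| → diagEntry (A n) k j = 0)
    (X : Set (Fin (2 * k₀ + 1) → ℂ)) (hX : IsCompact X)
    (μ : Measure (Fin (2 * k₀ + 1) → ℂ)) [IsProbabilityMeasure μ]
    (hmem : ∀ n : ℕ, ∀ j : ℕ, j < n → diagVec k₀ (A n) j ∈ X)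
    (hdist : ∀ g : (Fin (2 * k₀ + 1) → ℂ) → ℂ, ContinuousOn g X →
      Tendsto (fun n : ℕ => (n : ℂ)⁻¹ * ∑ j ∈ Finset.range n, g (diagVec k₀ (A n) j)) atTop
        (𝓝 (∫ z in X, g z ∂μ)))
    (r s : ℕ) :
    Tendsto (fun n : ℕ => (n : ℂ)⁻¹ * Matrix.trace ((A n) ^ r * ((A n)ᴴ) ^ s)) atTop
      (𝓝 ((2 * (Real.pi : ℂ))⁻¹ * ∫ t in (-Real.pi)..Real.pi,
        ∫ z in X, (bandP k₀ z t) ^ r * (starRingEnd ℂ (bandP k₀ z t)) ^ s ∂μ)) := by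
  have hP := continuous_uncurry_bandP k₀
  have hlimit := integral_fourierCoeffPi_zero (μ := μ) hX
    (F := fun z t => bandP k₀ z t ^ r * starRingEnd ℂ (bandP k₀ z t) ^ s)
    ((hP.pow r).mul ((Complex.continuous_conj.comp hP).pow s))
  simp only [← momentSymbol_eq_fourierCoeffPi] at hlimit
  rw [← hlimit]
  exact tendsto_inv_mul_trace_of_diagDefect (isLittleO_diagDefect_moment hVMV hband hX hmem r s 0)
    (hdist _ (continuous_momentSymbol k₀ r s 0).continuousOn)

/-- **Trace moments of μ-distributed VMV band-matrix sequences.**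
If `{Aₙ} ∈ VMV` has fixed band size `k₀` and is `μ`-distributed on a compact
`X ⊆ ℂ^{2k₀+1}`, then for all `r s : ℕ`,
`(1/n) Tr[Aₙ^r (Aₙ*)^s] → (1/2π) ∫_{-π}^{π} ∫_X P(z,t)^r conj(P(z,t))^s dμ(z) dt`. -/
theorem trace_moments_band (k₀ : ℕ) (A : ∀ n : ℕ, Matrix (Fin n) (Fin n) ℂ)
    (hVMV : VMV A)
    (hband : ∀ n : ℕ, ∀ k j : ℤ, (k₀ : ℤ) < |k| → diagEntry (A n) k j = 0)
    (X : Set (Fin (2 * k₀ + 1) → ℂ)) (hX : IsCompact X)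
    (μ : Measure (Fin (2 * k₀ + 1) → ℂ)) [IsProbabilityMeasure μ] (hμX : μ Xᶜ = 0)
    (hmem : ∀ n : ℕ, ∀ j : ℕ, j < n → diagVec k₀ (A n) j ∈ X)
    (hdist : ∀ g : (Fin (2 * k₀ + 1) → ℂ) → ℂ, ContinuousOn g X →
      Tendsto (fun n : ℕ => (n : ℂ)⁻¹ * ∑ j ∈ Finset.range n, g (diagVec k₀ (A n) j)) atTop
        (𝓝 (∫ z in X, g z ∂μ)))
    (r s : ℕ) :
    Tendsto (fun n : ℕ => (n : ℂ)⁻¹ * Matrix.trace ((A n) ^ r * ((A n)ᴴ) ^ s)) atTop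
      (𝓝 ((2 * (Real.pi : ℂ))⁻¹ * ∫ t in (-Real.pi)..Real.pi,
        ∫ z in X, (bandP k₀ z t) ^ r * (starRingEnd ℂ (bandP k₀ z t)) ^ s ∂μ)) :=
  trace_moments_band_general k₀ A hVMV hband X hX μ hmem hdist r s
end

section
/- Let M > 0 and let {A_n} and {B_n} be sequences of n×n complex matrices with spectral norms ‖A_n‖_∞ ≤ M and ‖B_n‖_∞ ≤ M for all n, and with ‖A_n − B_n‖_tr = o(n) as n → ∞. Then for every function φ that is analytic on an open neighborhood of the closed disk {z ∈ ℂ : |z| ≤ M}, one has Σ_{k=1}^{n} φ(λ_k(A_n)) − Σ_{k=1}^{n} φ(λ_k(B_n)) = o(n) as n → ∞, where λ_1, …, λ_n denote the eigenvalues counted with multiplicity (all of which lie in the closed disk of radius M). -/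
open Filter Asymptotics Matrix

/-- The spectral norm (ℓ² → ℓ² operator norm, i.e. the largest singular value)
of a complex matrix. -/
noncomputable def specNorm {n : ℕ} (A : Matrix (Fin n) (Fin n) ℂ) : ℝ :=
  ‖LinearMap.toContinuousLinearMap (Matrix.toEuclideanLin A)‖

/-- The trace norm `‖A‖_tr = ∑ σ_k(A)`, the sum of the singular values of `A`,
i.e. of the square roots of the eigenvalues of `Aᴴ A`. -/
noncomputable def traceNorm {n : ℕ} (A : Matrix (Fin n) (Fin n) ℂ) : ℝ :=
  ∑ i, Real.sqrt ((Matrix.isHermitian_conjTranspose_mul_self A).eigenvalues i)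

/-!
Approximate `φ` uniformly on the disk of radius `M` within `ε` by a Taylor polynomial `q`. All
eigenvalues lie in that disk, so replacing `φ` by `q` costs at most `ε n` on each side. For the
polynomial, `∑ q(λ_k(A)) = tr q(A)`: on each generalized eigenspace `q(A)` is the scalar `q(λ)` plus
a nilpotent. Finally `A^i - B^i` telescopes into `i` terms `A^j (A - B) B^(i-1-j)`, and
`|tr(Z C)| ≤ ‖Z‖_∞ ‖C‖_tr` bounds the trace of each by `M^(i-1) ‖A - B‖_tr`. Altogether the
difference is at most `2 ε n + L_q ‖Aₙ - Bₙ‖_tr`, which is `o(n)`.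
-/

open Polynomial Finset Metric
open scoped Matrix.Norms.L2Operator InnerProductSpace

theorem isNilpotent_aeval_sub_algebraMap_eval {R A : Type*} [CommRing R] [Ring A] [Algebra R A]
    {a : A} {μ : R} (ha : IsNilpotent (a - algebraMap R A μ)) (p : R[X]) :
    IsNilpotent (aeval a p - algebraMap R A (p.eval μ)) := by
  obtain ⟨r, hr⟩ := X_sub_C_dvd_sub_C_eval (a := μ) (p := p)
  have hfac : aeval a p - algebraMap R A (p.eval μ) = aeval a (X - C μ) * aeval a r := by
    simpa using congrArg (aeval a) hr
  rw [hfac]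
  exact ((Commute.all (X - C μ) r).map (aeval a)).isNilpotent_mul_right (by simpa using ha)

theorem pow_sub_pow_eq_sum {R : Type*} [Ring R] (a b : R) (i : ℕ) :
    a ^ i - b ^ i = ∑ j ∈ range i, a ^ j * (a - b) * b ^ (i - 1 - j) := by
  have hterm : ∀ j ∈ range i, a ^ j * (a - b) * b ^ (i - 1 - j) =
      a ^ (j + 1) * b ^ (i - (j + 1)) - a ^ j * b ^ (i - j) := by
    intro j hj
    obtain ⟨k, rfl⟩ : ∃ k, i = j + 1 + k := ⟨i - (j + 1), by rw [mem_range] at hj; omega⟩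
    rw [show j + 1 + k - 1 - j = k by omega, show j + 1 + k - (j + 1) = k by omega,
      show j + 1 + k - j = k + 1 by omega, pow_succ, pow_succ']
    noncomm_ring
  rw [sum_congr rfl hterm, sum_range_sub (fun j => a ^ j * b ^ (i - j))]
  simp

theorem Multiset.norm_sum_map_sub_le {α E : Type*} [SeminormedAddCommGroup E] {s : Multiset α}
    {f g : α → E} {ε : ℝ} (h : ∀ x ∈ s, ‖f x - g x‖ ≤ ε) :
    ‖(s.map f).sum - (s.map g).sum‖ ≤ Multiset.card s * ε := by
  rw [← Multiset.sum_map_sub]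
  refine (norm_multiset_sum_le _).trans ?_
  rw [Multiset.map_map]
  refine (Multiset.sum_le_card_nsmul _ ε (by simpa using h)).trans_eq ?_
  rw [Multiset.card_map, nsmul_eq_mul]

theorem Asymptotics.isLittleO_of_forall_norm_le_add {α E F : Type*} [Norm E] [Norm F]
    {l : Filter α} {f : α → E} {g : α → F} {t : α → ℝ} (ht : t =o[l] g)
    (h : ∀ ε > 0, ∃ L, ∀ᶠ x in l, ‖f x‖ ≤ ε * ‖g x‖ + L * t x) : f =o[l] g := by
  refine isLittleO_iff.2 fun c hc => ?_
  obtain ⟨L, hL⟩ := h (c / 2) (half_pos hc)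
  filter_upwards [hL, (ht.const_mul_left L).bound (half_pos hc)] with x hf ht
  calc ‖f x‖ ≤ c / 2 * ‖g x‖ + L * t x := hf
    _ ≤ c / 2 * ‖g x‖ + c / 2 * ‖g x‖ := by linarith [Real.le_norm_self (L * t x)]
    _ = c * ‖g x‖ := by ring

namespace Module.End

theorem aeval_restrict_apply {R M : Type*} [CommRing R] [AddCommGroup M] [Module R M]
    {f : End R M} {N : Submodule R M} (hf : Set.MapsTo f N N) (p : R[X]) (x : N) :
    (aeval (f.restrict hf) p x : M) = aeval f p x := by
  induction p using Polynomial.induction_on' with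
  | add p q hp hq => simp [hp, hq]
  | monomial k a => simp [aeval_monomial, Algebra.algebraMap_eq_smul_one, pow_restrict k hf]

theorem trace_aeval_of_isNilpotent_sub_algebraMap {R M : Type*} [CommRing R] [IsReduced R]
    [AddCommGroup M] [Module R M] [Module.Free R M] [Module.Finite R M] {f : End R M} {μ : R}
    (hf : IsNilpotent (f - algebraMap R _ μ)) (p : R[X]) :
    LinearMap.trace R M (aeval f p) = Module.finrank R M * p.eval μ := by
  have h0 := (LinearMap.isNilpotent_trace_of_isNilpotent
    (isNilpotent_aeval_sub_algebraMap_eval hf p)).eq_zero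
  rw [map_sub, sub_eq_zero] at h0
  rw [h0, Algebra.algebraMap_eq_smul_one, map_smul, LinearMap.trace_one, smul_eq_mul, mul_comm]

section Field

variable {K V : Type*} [Field K] [AddCommGroup V] [Module K V] [FiniteDimensional K V]

theorem trace_aeval_restrict_maxGenEigenspace (f : End K V) (p : K[X]) (μ : K)
    (h : Set.MapsTo (aeval f p) (f.maxGenEigenspace μ) (f.maxGenEigenspace μ)) :
    LinearMap.trace K _ ((aeval f p).restrict h) = f.charpoly.rootMultiplicity μ * p.eval μ := by
  have hnil : IsNilpotent (f.restrict (f.mapsTo_maxGenEigenspace_of_comm rfl μ) -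
      algebraMap K _ μ) := by
    convert f.isNilpotent_restrict_maxGenEigenspace_sub_algebraMap μ using 1
    ext
    rfl
  rw [← LinearMap.finrank_maxGenEigenspace_eq, ← trace_aeval_of_isNilpotent_sub_algebraMap hnil]
  congr 1
  ext x
  exact (aeval_restrict_apply _ p x).symm

theorem trace_aeval_eq_sum_roots_charpoly [IsAlgClosed K] (f : End K V) (p : K[X]) :
    LinearMap.trace K V (aeval f p) = (f.charpoly.roots.map p.eval).sum := by
  classical
  have hds := DirectSum.isInternal_submodule_of_iSupIndep_of_iSup_eq_top
    f.independent_maxGenEigenspace f.iSup_maxGenEigenspace_eq_top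
  have hfin := WellFoundedGT.finite_ne_bot_of_iSupIndep f.independent_maxGenEigenspace
  have hmaps (μ : K) : Set.MapsTo (aeval f p) (f.maxGenEigenspace μ) (f.maxGenEigenspace μ) :=
    f.mapsTo_maxGenEigenspace_of_comm (by simpa using (Commute.all X p).map (aeval f)) μ
  have hzero (μ : K) : f.charpoly.rootMultiplicity μ = 0 ↔ f.maxGenEigenspace μ = ⊥ := by
    rw [← LinearMap.finrank_maxGenEigenspace_eq, Submodule.finrank_eq_zero]
  rw [LinearMap.trace_eq_sum_trace_restrict' hds hfin hmaps, sum_multiset_map_count]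
  simp only [trace_aeval_restrict_maxGenEigenspace, count_roots, nsmul_eq_mul]
  refine sum_subset (fun μ hμ => ?_) (fun μ _ hμ => ?_)
  · rw [Set.Finite.mem_toFinset] at hμ
    rwa [Multiset.mem_toFinset, ← Multiset.count_pos, count_roots, Nat.pos_iff_ne_zero, Ne,
      hzero]
  · rw [Set.Finite.mem_toFinset, Set.mem_ofPred_eq, not_not, ← hzero] at hμ
    rw [hμ, Nat.cast_zero, zero_mul]

end Field

end Module.End

namespace Matrix

theorem trace_aeval_eq_sum_roots_charpoly {K n : Type*} [Field K] [IsAlgClosed K] [Fintype n]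
    [DecidableEq n] (A : Matrix n n K) (p : K[X]) :
    (aeval A p).trace = (A.charpoly.roots.map p.eval).sum := by
  rw [← charpoly_toLin', ← Module.End.trace_aeval_eq_sum_roots_charpoly, ← trace_toLin'_eq]
  congr 1
  exact (aeval_algHom_apply toLinAlgEquiv'.toAlgHom A p).symm

variable {𝕜 n : Type*} [RCLike 𝕜] [Fintype n] [DecidableEq n]

theorem l2_opNorm_one_le : ‖(1 : Matrix n n 𝕜)‖ ≤ 1 := by
  rw [cstar_norm_def, map_one]
  exact ContinuousLinearMap.norm_id_le

theorem l2_opNorm_pow_le (A : Matrix n n 𝕜) (k : ℕ) : ‖A ^ k‖ ≤ ‖A‖ ^ k := by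
  rcases k.eq_zero_or_pos with rfl | hk
  · simpa using l2_opNorm_one_le
  · exact norm_pow_le' A hk

theorem norm_le_l2_opNorm_of_mem_roots_charpoly {A : Matrix n n 𝕜} {μ : 𝕜}
    (hμ : μ ∈ A.charpoly.roots) : ‖μ‖ ≤ ‖A‖ := by
  have hspec : μ ∈ spectrum 𝕜 A := mem_spectrum_iff_isRoot_charpoly.2 (isRoot_of_mem_roots hμ)
  calc ‖μ‖ ≤ ‖A‖ * ‖(1 : Matrix n n 𝕜)‖ := spectrum.norm_le_norm_mul_of_mem hspec
    _ ≤ ‖A‖ := mul_le_of_le_one_right (norm_nonneg A) l2_opNorm_one_le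

theorem trace_toEuclideanLin (A : Matrix n n 𝕜) :
    LinearMap.trace 𝕜 _ (toEuclideanLin A) = A.trace := by
  rw [LinearMap.trace_eq_matrix_trace 𝕜 (PiLp.basisFun 2 𝕜 n)]
  exact congrArg trace (LinearMap.toMatrix_toLin _ _ A)

theorem norm_toEuclideanLin_apply_le (A : Matrix n n 𝕜) (x : EuclideanSpace 𝕜 n) :
    ‖toEuclideanLin A x‖ ≤ ‖A‖ * ‖x‖ :=
  (toEuclideanCLM (n := n) (𝕜 := 𝕜) A).le_opNorm x

theorem norm_toEuclideanLin_eigenvectorBasis (C : Matrix n n 𝕜) (i : n) :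
    ‖toEuclideanLin C ((isHermitian_conjTranspose_mul_self C).eigenvectorBasis i)‖ =
      √((isHermitian_conjTranspose_mul_self C).eigenvalues i) := by
  rw [(isHermitian_conjTranspose_mul_self C).eigenvalues_eq i, ← mulVec_mulVec, dotProduct_mulVec,
    ← star_mulVec, norm_eq_sqrt_re_inner (𝕜 := 𝕜), EuclideanSpace.inner_eq_star_dotProduct,
    dotProduct_comm]
  rfl

theorem norm_trace_mul_le (Z C : Matrix n n 𝕜) :
    ‖(Z * C).trace‖ ≤ ‖Z‖ * ∑ i, √((isHermitian_conjTranspose_mul_self C).eigenvalues i) := by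
  set u := (isHermitian_conjTranspose_mul_self C).eigenvectorBasis
  rw [← trace_toEuclideanLin, LinearMap.trace_eq_sum_inner _ u, mul_sum]
  refine (norm_sum_le _ _).trans (sum_le_sum fun i _ => ?_)
  rw [← norm_toEuclideanLin_eigenvectorBasis]
  calc ‖⟪u i, toEuclideanLin (Z * C) (u i)⟫_𝕜‖ ≤ ‖u i‖ * ‖toEuclideanLin (Z * C) (u i)‖ :=
        norm_inner_le_norm _ _
    _ = ‖toEuclideanLin Z (toEuclideanLin C (u i))‖ := by
        rw [u.orthonormal.1 i, one_mul, toLpLin_mul_same, LinearMap.comp_apply]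
    _ ≤ ‖Z‖ * ‖toEuclideanLin C (u i)‖ := norm_toEuclideanLin_apply_le _ _

theorem norm_sum_roots_charpoly_sub_trace_aeval_le {A : Matrix n n ℂ} {M ε : ℝ} (hA : ‖A‖ ≤ M)
    {φ : ℂ → ℂ} {q : ℂ[X]} (hq : ∀ z ∈ closedBall 0 M, ‖φ z - q.eval z‖ ≤ ε) :
    ‖(A.charpoly.roots.map φ).sum - (aeval A q).trace‖ ≤ Fintype.card n * ε := by
  rw [trace_aeval_eq_sum_roots_charpoly, ← charpoly_natDegree_eq_dim A,
    ← IsAlgClosed.card_roots_eq_natDegree (p := A.charpoly)]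
  refine Multiset.norm_sum_map_sub_le fun μ hμ => hq μ ?_
  exact mem_closedBall_zero_iff.2 ((norm_le_l2_opNorm_of_mem_roots_charpoly hμ).trans hA)

end Matrix

theorem traceNorm_nonneg {n : ℕ} (A : Matrix (Fin n) (Fin n) ℂ) : 0 ≤ traceNorm A :=
  sum_nonneg fun _ _ => Real.sqrt_nonneg _

theorem norm_trace_pow_sub_pow_le {n : ℕ} {A B : Matrix (Fin n) (Fin n) ℂ} {M : ℝ}
    (hA : ‖A‖ ≤ M) (hB : ‖B‖ ≤ M) (i : ℕ) :
    ‖(A ^ i).trace - (B ^ i).trace‖ ≤ i * M ^ (i - 1) * traceNorm (A - B) := by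
  have hM : 0 ≤ M := (norm_nonneg A).trans hA
  rw [← trace_sub, pow_sub_pow_eq_sum, trace_sum]
  calc ‖∑ j ∈ range i, (A ^ j * (A - B) * B ^ (i - 1 - j)).trace‖
      ≤ ∑ j ∈ range i, M ^ (i - 1) * traceNorm (A - B) := by
        refine (norm_sum_le _ _).trans (sum_le_sum fun j hj => ?_)
        rw [trace_mul_cycle]
        refine (norm_trace_mul_le _ _).trans (mul_le_mul_of_nonneg_right ?_ (traceNorm_nonneg _))
        calc ‖B ^ (i - 1 - j) * A ^ j‖ ≤ ‖B‖ ^ (i - 1 - j) * ‖A‖ ^ j :=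
              (l2_opNorm_mul _ _).trans (mul_le_mul (l2_opNorm_pow_le _ _)
                (l2_opNorm_pow_le _ _) (norm_nonneg _) (by positivity))
          _ ≤ M ^ (i - 1 - j) * M ^ j := by gcongr
          _ = M ^ (i - 1) := by rw [← pow_add]; congr 1; rw [mem_range] at hj; omega
    _ = i * M ^ (i - 1) * traceNorm (A - B) := by
        rw [sum_const, card_range, nsmul_eq_mul, mul_assoc]

theorem norm_trace_aeval_sub_le {n : ℕ} {A B : Matrix (Fin n) (Fin n) ℂ} {M : ℝ}
    (hA : ‖A‖ ≤ M) (hB : ‖B‖ ≤ M) (q : ℂ[X]) :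
    ‖(aeval A q).trace - (aeval B q).trace‖ ≤
      (∑ i ∈ range (q.natDegree + 1), ‖q.coeff i‖ * (i * M ^ (i - 1))) * traceNorm (A - B) := by
  rw [aeval_eq_sum_range, aeval_eq_sum_range, trace_sum, trace_sum, ← sum_sub_distrib, sum_mul]
  refine (norm_sum_le _ _).trans (sum_le_sum fun i _ => ?_)
  rw [trace_smul, trace_smul, ← smul_sub, norm_smul, mul_assoc]
  exact mul_le_mul_of_nonneg_left (norm_trace_pow_sub_pow_le hA hB i) (norm_nonneg _)

theorem AnalyticOnNhd.exists_polynomial_approx_closedBall {φ : ℂ → ℂ} {r : ℝ}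
    (hr : 0 ≤ r) (hφ : AnalyticOnNhd ℂ φ (closedBall 0 r)) {ε : ℝ} (hε : 0 < ε) :
    ∃ q : ℂ[X], ∀ z ∈ closedBall (0 : ℂ) r, ‖φ z - q.eval z‖ ≤ ε := by
  obtain ⟨δ, hδ, hsub⟩ := (isCompact_closedBall (0 : ℂ) r).exists_cthickening_subset_open
    (isOpen_analyticAt ℂ φ) hφ
  rw [cthickening_closedBall hδ.le hr] at hsub
  let R : NNReal := ⟨δ + r, by positivity⟩
  let R' : NNReal := ⟨δ / 2 + r, by positivity⟩
  have hR : (R : ℝ) = δ + r := rfl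
  have hR' : (R' : ℝ) = δ / 2 + r := rfl
  have hps := DifferentiableOn.hasFPowerSeriesOnBall (R := R)
    (fun z hz => (hsub hz).differentiableAt.differentiableWithinAt)
    (NNReal.coe_pos.1 (by rw [hR]; positivity))
  have hRR' : (R' : ENNReal) < R :=
    ENNReal.coe_lt_coe.2 (NNReal.coe_lt_coe.1 (by rw [hR, hR']; linarith))
  obtain ⟨N, hN⟩ := (Metric.tendstoUniformlyOn_iff.1 (hps.tendstoUniformlyOn hRR') ε hε).exists
  refine ⟨∑ k ∈ range N, C ((cauchyPowerSeries φ 0 R).coeff k) * X ^ k, fun z hz => ?_⟩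
  have hzR' : z ∈ ball (0 : ℂ) R' := closedBall_subset_ball (by rw [hR']; linarith) hz
  have heval : eval z (∑ k ∈ range N, C ((cauchyPowerSeries φ 0 R).coeff k) * X ^ k) =
      (cauchyPowerSeries φ 0 R).partialSum N z := by
    simp only [FormalMultilinearSeries.partialSum, eval_finsetSum, eval_mul, eval_C, eval_pow,
      eval_X, FormalMultilinearSeries.apply_eq_pow_smul_coeff, smul_eq_mul, mul_comm]
  simpa [heval, dist_eq_norm] using (hN z hzR').le

theorem trace_comparison_analytic_general (M : ℝ)
    (A B : ∀ n : ℕ, Matrix (Fin n) (Fin n) ℂ)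
    (hA : ∀ n, specNorm (A n) ≤ M) (hB : ∀ n, specNorm (B n) ≤ M)
    (htr : (fun n : ℕ => traceNorm (A n - B n)) =o[atTop] (fun n : ℕ => (n : ℝ)))
    (φ : ℂ → ℂ) (U : Set ℂ) (hUM : Metric.closedBall (0 : ℂ) M ⊆ U)
    (hφ : AnalyticOnNhd ℂ φ U) :
    (fun n : ℕ => (((A n).charpoly.roots.map φ).sum - ((B n).charpoly.roots.map φ).sum))
      =o[atTop] (fun n : ℕ => (n : ℝ)) := by
  have hM : 0 ≤ M := (norm_nonneg _).trans (hA 0)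
  refine isLittleO_of_forall_norm_le_add htr fun ε hε => ?_
  obtain ⟨q, hq⟩ := (hφ.mono hUM).exists_polynomial_approx_closedBall hM (half_pos hε)
  refine ⟨∑ i ∈ range (q.natDegree + 1), ‖q.coeff i‖ * (i * M ^ (i - 1)),
    Eventually.of_forall fun n => ?_⟩
  have hφA := norm_sum_roots_charpoly_sub_trace_aeval_le (hA n) hq
  have hφB := norm_sum_roots_charpoly_sub_trace_aeval_le (hB n) hq
  have hqAB := norm_trace_aeval_sub_le (hA n) (hB n) q
  rw [Fintype.card_fin] at hφA hφB
  calc _ = ‖(((A n).charpoly.roots.map φ).sum - (aeval (A n) q).trace) +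
        ((aeval (A n) q).trace - (aeval (B n) q).trace) -
        (((B n).charpoly.roots.map φ).sum - (aeval (B n) q).trace)‖ := by congr 1; ring
    _ ≤ ε * ‖(n : ℝ)‖ + _ * traceNorm (A n - B n) := by
      rw [Real.norm_natCast]
      linarith [norm_sub_le_of_le (norm_add_le_of_le hφA hqAB) hφB]

/-- If `‖Aₙ‖_∞ ≤ M`, `‖Bₙ‖_∞ ≤ M` and `‖Aₙ - Bₙ‖_tr = o(n)`, then for every `φ` analytic on an
open neighborhood of the closed disk of radius `M`,
`∑_k φ(λ_k(Aₙ)) - ∑_k φ(λ_k(Bₙ)) = o(n)`, where the eigenvalues are the roots of the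
characteristic polynomial counted with multiplicity. -/
theorem trace_comparison_analytic (M : ℝ) (hM : 0 < M)
    (A B : ∀ n : ℕ, Matrix (Fin n) (Fin n) ℂ)
    (hA : ∀ n, specNorm (A n) ≤ M) (hB : ∀ n, specNorm (B n) ≤ M)
    (htr : (fun n : ℕ => traceNorm (A n - B n)) =o[atTop] (fun n : ℕ => (n : ℝ)))
    (φ : ℂ → ℂ) (U : Set ℂ) (hU : IsOpen U) (hUM : Metric.closedBall (0 : ℂ) M ⊆ U)
    (hφ : AnalyticOnNhd ℂ φ U) :
    (fun n : ℕ => (((A n).charpoly.roots.map φ).sum - ((B n).charpoly.roots.map φ).sum))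
      =o[atTop] (fun n : ℕ => (n : ℝ)) :=
  trace_comparison_analytic_general M A B hA hB htr φ U hUM hφ
end
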